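/- Let ↦ᵢ (i ∈ I) be strict linear orders on a finite set M and ↦ = ∩ᵢ ↦ᵢ. For a fixed subset S ⊆ M, let x_i denote the ↦ᵢ-minimum element of S for each i. Then the set {x_i : i ∈ I} is an antichain of ↦; hence if width(↦) ≤ k then |{x_i : i ∈ I}| ≤ k. -/
import Mathlib


/-- The set of per-process minima of a fixed set `S` forms an antichain of
the intersection order; hence if the width is at most `k` it has at most `k`
elements. -/
theorem stmt_17 {I M : Type} [Fintype I] [Nonempty I] [Fintype M]
    [DecidableEq M]
    (r : I → M → M → Prop) (hr : ∀ i, IsStrictTotalOrder M (r i)) (k : ℕ)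
    (hwidth : ∀ A : Finset M,
      (∀ m ∈ A, ∀ m' ∈ A, m ≠ m' →
        ¬ (∀ i, r i m m') ∧ ¬ (∀ i, r i m' m)) → A.card ≤ k)
    (S : Finset M) (x : I → M)
    (hx : ∀ i, x i ∈ S)
    (hmin : ∀ i, ∀ m ∈ S, m ≠ x i → r i (x i) m) :
    (∀ m ∈ Finset.univ.image x, ∀ m' ∈ Finset.univ.image x, m ≠ m' →
      ¬ (∀ i, r i m m') ∧ ¬ (∀ i, r i m' m)) ∧
    (Finset.univ.image x).card ≤ k := by
  have anti : ∀ m ∈ Finset.univ.image x, ∀ m' ∈ Finset.univ.image x, m ≠ m' →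
      ¬ (∀ i, r i m m') ∧ ¬ (∀ i, r i m' m) := by
    intro m hm m' hm' hne
    obtain ⟨i, -, rfl⟩ := Finset.mem_image.mp hm
    obtain ⟨j, -, rfl⟩ := Finset.mem_image.mp hm'
    constructor
    · intro hall
      exact (hr j).irrefl _ ((hr j).trans _ _ _ (hall j) (hmin j (x i) (hx i) hne))
    · intro hall
      exact (hr i).irrefl _ ((hr i).trans _ _ _ (hall i) (hmin i (x j) (hx j) (Ne.symm hne)))
  exact ⟨anti, hwidth _ anti⟩
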